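/- If each f_i : H → ℝ is convex and differentiable with L-Lipschitz gradient, and F = (1/n) ∑ᵢ f_i satisfies ∇F(y) = 0, then (1/n) ∑ᵢ ‖∇f_i(x) − ∇f_i(y)‖² ≤ 2L (F(x) − F(y)) for all x. -/

import Mathlib

/-!
Each `f i` is convex with `L`-Lipschitz gradient, hence its gradient is co-coercive:
`‖∇f b - ∇f a‖² ≤ 2L (f b - f a - ⟪∇f a, b - a⟫)`. This follows by evaluating `f` at
`c = b - L⁻¹ (∇f b - ∇f a)`, bounding `f c` from below by convexity at `a` and from above by the
descent lemma at `b`. Averaging over `i` with `a = y`, `b = x`, the linear terms sum to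
`⟪∇F y, x - y⟫ = 0`.
-/

open Set Finset
open scoped RealInnerProductSpace

section

variable {H : Type*} [NormedAddCommGroup H] [InnerProductSpace ℝ H] [CompleteSpace H]
  {f : H → ℝ} {g : H → H}

theorem HasGradientAt.hasDerivAt_comp_add_smul {f' a v : H} {t : ℝ}
    (hf : HasGradientAt f f' (a + t • v)) :
    HasDerivAt (fun s : ℝ => f (a + s • v)) ⟪f', v⟫ t := by
  have hline : HasDerivAt (fun s : ℝ => a + s • v) v t := by
    simpa using ((hasDerivAt_id t).smul_const v).const_add a
  exact hf.hasFDerivAt.comp_hasDerivAt t hline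

theorem ConvexOn.add_inner_le_of_hasGradientAt {f' a : H} (hconv : ConvexOn ℝ univ f)
    (hf : HasGradientAt f f' a) (b : H) : f a + ⟪f', b - a⟫ ≤ f b := by
  have hline : ConvexOn ℝ univ (fun t : ℝ => f (a + t • (b - a))) := by
    simpa [Function.comp_def, AffineMap.lineMap_apply, add_comm]
      using hconv.comp_affineMap (AffineMap.lineMap a b)
  have hderiv : HasDerivAt (fun t : ℝ => f (a + t • (b - a))) ⟪f', b - a⟫ 0 :=
    HasGradientAt.hasDerivAt_comp_add_smul (by simpa using hf)
  have hslope := hline.le_slope_of_hasDerivAt (mem_univ 0) (mem_univ 1) one_pos hderiv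
  simp only [slope_def_field, zero_smul, one_smul, add_zero, add_sub_cancel, sub_zero,
    div_one] at hslope
  linarith

theorem le_add_inner_add_of_lipschitz_gradient {L : ℝ} (hgrad : ∀ x, HasGradientAt f (g x) x)
    (hlip : ∀ x y, ‖g x - g y‖ ≤ L * ‖x - y‖) (a b : H) :
    f b ≤ f a + ⟪g a, b - a⟫ + L / 2 * ‖b - a‖ ^ 2 := by
  set v := b - a
  have hderiv (t : ℝ) : HasDerivAt (fun s : ℝ => f (a + s • v)) ⟪g (a + t • v), v⟫ t :=
    (hgrad _).hasDerivAt_comp_add_smul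
  have hbound (t : ℝ) (ht : 0 ≤ t) : ⟪g (a + t • v), v⟫ ≤ ⟪g a, v⟫ + L * t * ‖v‖ ^ 2 := by
    have hcs := real_inner_le_norm (g (a + t • v) - g a) v
    have hl : ‖g (a + t • v) - g a‖ ≤ L * (t * ‖v‖) := by
      simpa [norm_smul, abs_of_nonneg ht] using hlip (a + t • v) a
    rw [inner_sub_left] at hcs
    nlinarith [mul_le_mul_of_nonneg_right hl (norm_nonneg v)]
  have hB (t : ℝ) : HasDerivAt (fun s : ℝ => f a + s * ⟪g a, v⟫ + L / 2 * s ^ 2 * ‖v‖ ^ 2)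
      (⟪g a, v⟫ + L * t * ‖v‖ ^ 2) t := by
    have := (((hasDerivAt_id' t).mul_const ⟪g a, v⟫).const_add (f a)).fun_add
      (((hasDerivAt_pow 2 t).const_mul (L / 2)).mul_const (‖v‖ ^ 2))
    exact this.congr_deriv (by push_cast; ring)
  -- compare `t ↦ f (a + t • v)` on `[0, 1]` with its quadratic upper model, derivative by derivative
  have := image_le_of_deriv_right_le_deriv_boundary (a := 0) (b := 1)
    (fun t _ => (hderiv t).continuousAt.continuousWithinAt)
    (fun t _ => (hderiv t).hasDerivWithinAt) (by simp)
    (fun t _ => (hB t).continuousAt.continuousWithinAt)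
    (fun t _ => (hB t).hasDerivWithinAt) (fun t ht => hbound t ht.1) (right_mem_Icc.2 zero_le_one)
  simpa [v] using this

theorem sq_norm_sub_gradient_le_of_convexOn {L : ℝ} (hL : 0 < L) (hconv : ConvexOn ℝ univ f)
    (hgrad : ∀ x, HasGradientAt f (g x) x) (hlip : ∀ x y, ‖g x - g y‖ ≤ L * ‖x - y‖) (a b : H) :
    ‖g b - g a‖ ^ 2 ≤ 2 * L * (f b - f a - ⟪g a, b - a⟫) := by
  set d := g b - g a
  set c := b - L⁻¹ • d
  have hbelow := hconv.add_inner_le_of_hasGradientAt (hgrad a) c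
  have habove := le_add_inner_add_of_lipschitz_gradient hgrad hlip b c
  have hgap : ⟪g a, c - a⟫ - ⟪g b, c - b⟫ - L / 2 * ‖c - b‖ ^ 2 =
      ⟪g a, b - a⟫ + ‖d‖ ^ 2 / (2 * L) := by
    have hca : c - a = (b - a) - L⁻¹ • d := by simp only [c]; abel
    have hcb : c - b = -(L⁻¹ • d) := by simp only [c]; abel
    have hd : ⟪g b, d⟫ = ⟪g a, d⟫ + ‖d‖ ^ 2 := by
      rw [← real_inner_self_eq_norm_sq, ← inner_add_left, add_sub_cancel]
    rw [hca, hcb, inner_sub_right, inner_neg_right, real_inner_smul_right, real_inner_smul_right,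
      norm_neg, norm_smul, Real.norm_of_nonneg (inv_nonneg.2 hL.le), hd]
    field_simp
    ring
  have hkey : ‖d‖ ^ 2 / (2 * L) ≤ f b - f a - ⟪g a, b - a⟫ := by linarith
  rwa [div_le_iff₀' (by positivity)] at hkey

end

theorem stmt0_general {H : Type*} [NormedAddCommGroup H] [InnerProductSpace ℝ H] [CompleteSpace H]
    (n : ℕ) (f : Fin n → H → ℝ) (g : Fin n → H → H) (L : ℝ) (hL : 0 < L)
    (hconv : ∀ i, ConvexOn ℝ Set.univ (f i))
    (hgrad : ∀ i x, HasGradientAt (f i) (g i x) x)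
    (hlip : ∀ i x y, ‖g i x - g i y‖ ≤ L * ‖x - y‖)
    (y : H) (hy : (1 / (n : ℝ)) • ∑ i, g i y = 0) (x : H) :
    (1 / (n : ℝ)) * ∑ i, ‖g i x - g i y‖ ^ 2 ≤
      2 * L * ((1 / (n : ℝ)) * ∑ i, f i x - (1 / (n : ℝ)) * ∑ i, f i y) := by
  have hstationary : (1 / (n : ℝ)) * ∑ i, ⟪g i y, x - y⟫ = 0 := by
    rw [← sum_inner, ← real_inner_smul_left, hy, inner_zero_left]
  calc (1 / (n : ℝ)) * ∑ i, ‖g i x - g i y‖ ^ 2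
      ≤ (1 / (n : ℝ)) * ∑ i, 2 * L * (f i x - f i y - ⟪g i y, x - y⟫) := by
        gcongr with i
        exact sq_norm_sub_gradient_le_of_convexOn hL (hconv i) (hgrad i) (hlip i) y x
    _ = 2 * L * ((1 / (n : ℝ)) * ∑ i, f i x - (1 / (n : ℝ)) * ∑ i, f i y)
          - 2 * L * ((1 / (n : ℝ)) * ∑ i, ⟪g i y, x - y⟫) := by
        simp only [mul_sum, ← sum_sub_distrib]
        ring_nf
    _ = 2 * L * ((1 / (n : ℝ)) * ∑ i, f i x - (1 / (n : ℝ)) * ∑ i, f i y) := by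
        rw [hstationary, mul_zero, sub_zero]

theorem stmt0 {H : Type*} [NormedAddCommGroup H] [InnerProductSpace ℝ H] [CompleteSpace H]
    (n : ℕ) (hn : 1 ≤ n) (f : Fin n → H → ℝ) (g : Fin n → H → H) (L : ℝ) (hL : 0 < L)
    (hconv : ∀ i, ConvexOn ℝ Set.univ (f i))
    (hgrad : ∀ i x, HasGradientAt (f i) (g i x) x)
    (hlip : ∀ i x y, ‖g i x - g i y‖ ≤ L * ‖x - y‖)
    (y : H) (hy : (1 / (n : ℝ)) • ∑ i, g i y = 0) (x : H) :
    (1 / (n : ℝ)) * ∑ i, ‖g i x - g i y‖ ^ 2 ≤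
      2 * L * ((1 / (n : ℝ)) * ∑ i, f i x - (1 / (n : ℝ)) * ∑ i, f i y) :=
  stmt0_general n f g L hL hconv hgrad hlip y hy x
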